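/- Under the same perturbative hypotheses, if additionally ∫ h dp_σ > 0, then the ratio D(θ)/(F(θ) − f₀) converges as θ → 0⁺ to √Var(h) / ∫ h dp_σ. -/

import Mathlib

/-!
Write `f₀ + θ h + r_θ = f₀ + θ g_θ` with `g_θ = h + θ⁻¹ r_θ`. For `θ > 0` the standard deviation
and the mean gain both scale by exactly `θ`, so the ratio equals `√Var(g_θ) / ∫ g_θ`. Since
`‖g_θ - h‖₂ = ‖r_θ‖₂ / θ → 0`, and the first two moments are continuous for the `L²` norm
(on a probability space `|∫ f| ≤ ‖f‖₂` and `∫ f² = ‖f‖₂²`), the ratio tends to `√Var(h) / ∫ h`.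
-/

open MeasureTheory Asymptotics Filter ProbabilityTheory

section Moments

variable {Ω : Type*} [MeasurableSpace Ω] {μ : Measure Ω}

lemma integral_sq_eq_lpNorm_two_sq {f : Ω → ℝ} (hf : MemLp f 2 μ) :
    ∫ ω, f ω ^ 2 ∂μ = lpNorm f 2 μ ^ 2 := by
  rw [lpNorm_eq_integral_norm_rpow_toReal two_ne_zero ENNReal.ofNat_ne_top hf.1]
  simp only [ENNReal.toReal_ofNat, Real.rpow_two, Real.norm_eq_abs, sq_abs]
  rw [← Real.rpow_natCast, ← Real.rpow_mul (integral_nonneg fun _ => sq_nonneg _)]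
  norm_num

variable {ι : Type*} {l : Filter ι} {g : ι → Ω → ℝ} {f : Ω → ℝ}

lemma tendsto_integral_sq_of_tendsto_lpNorm_two_sub (hg : ∀ i, MemLp (g i) 2 μ)
    (hf : MemLp f 2 μ) (hlim : Tendsto (fun i => lpNorm (g i - f) 2 μ) l (nhds 0)) :
    Tendsto (fun i => ∫ ω, g i ω ^ 2 ∂μ) l (nhds (∫ ω, f ω ^ 2 ∂μ)) := by
  simp only [integral_sq_eq_lpNorm_two_sq (hg _), integral_sq_eq_lpNorm_two_sq hf]
  refine (tendsto_iff_norm_sub_tendsto_zero.2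
    (squeeze_zero (fun _ => norm_nonneg _) (fun i => ?_) hlim)).pow 2
  rw [Real.norm_eq_abs, abs_sub_le_iff, sub_le_iff_le_add', sub_le_iff_le_add']
  exact ⟨lpNorm_le_lpNorm_add_lpNorm_sub' hf one_le_two,
    lpNorm_le_lpNorm_add_lpNorm_sub (hg i) one_le_two⟩

variable [IsProbabilityMeasure μ]

lemma integral_sq_sub_sq_integral_eq_variance (hf : MemLp f 2 μ) :
    ∫ ω, f ω ^ 2 ∂μ - (∫ ω, f ω ∂μ) ^ 2 = Var[f; μ] :=
  (variance_eq_sub hf).symm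

lemma abs_integral_le_lpNorm_two (hf : MemLp f 2 μ) : |∫ ω, f ω ∂μ| ≤ lpNorm f 2 μ := by
  refine abs_le_of_sq_le_sq ?_ lpNorm_nonneg
  rw [← integral_sq_eq_lpNorm_two_sq hf, ← sub_nonneg, integral_sq_sub_sq_integral_eq_variance hf]
  exact variance_nonneg f μ

lemma tendsto_integral_of_tendsto_lpNorm_two_sub (hg : ∀ i, MemLp (g i) 2 μ) (hf : MemLp f 2 μ)
    (hlim : Tendsto (fun i => lpNorm (g i - f) 2 μ) l (nhds 0)) :
    Tendsto (fun i => ∫ ω, g i ω ∂μ) l (nhds (∫ ω, f ω ∂μ)) := by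
  refine tendsto_iff_norm_sub_tendsto_zero.2
    (squeeze_zero (fun _ => norm_nonneg _) (fun i => ?_) hlim)
  rw [Real.norm_eq_abs, ← integral_sub ((hg i).integrable one_le_two) (hf.integrable one_le_two)]
  exact abs_integral_le_lpNorm_two ((hg i).sub hf)

lemma integral_const_add_mul (c t : ℝ) (hf : Integrable f μ) :
    ∫ ω, (c + t * f ω) ∂μ = c + t * ∫ ω, f ω ∂μ := by
  rw [integral_add (integrable_const c) (hf.const_mul t), integral_const, integral_const_mul]
  simp

lemma sqrt_variance_div_mean_gain_const_add_mul (c : ℝ) {t : ℝ} (ht : 0 < t) (hf : MemLp f 2 μ) :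
    √(∫ ω, (c + t * f ω) ^ 2 ∂μ - (∫ ω, (c + t * f ω) ∂μ) ^ 2) / (∫ ω, (c + t * f ω) ∂μ - c)
      = √(∫ ω, f ω ^ 2 ∂μ - (∫ ω, f ω ∂μ) ^ 2) / ∫ ω, f ω ∂μ := by
  have hcf : MemLp (fun ω => c + t * f ω) 2 μ := (memLp_const c).add (hf.const_mul t)
  rw [integral_sq_sub_sq_integral_eq_variance hcf, integral_sq_sub_sq_integral_eq_variance hf,
    variance_const_add (hf.const_mul t).1, variance_const_mul,
    integral_const_add_mul c t (hf.integrable one_le_two), add_sub_cancel_left,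
    Real.sqrt_mul (sq_nonneg t), Real.sqrt_sq ht.le, mul_div_mul_left _ _ ht.ne']

end Moments

/-- The local universality-cost coefficient: the ratio of deviation growth to
mean fidelity improvement tends to `√Var(h) / ∫ h` as `θ → 0⁺`. -/
theorem universality_cost_slope
    (p : Measure ℂ) [IsProbabilityMeasure p]
    (f₀ : ℝ) (h : ℂ → ℝ) (hh : MemLp h 2 p)
    (r : ℝ → ℂ → ℝ) (hr : ∀ θ, MemLp (r θ) 2 p)
    (hro : (fun θ : ℝ => (eLpNorm (r θ) 2 p).toReal) =o[nhds (0 : ℝ)]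
      fun θ : ℝ => |θ|)
    (hmean : 0 < ∫ α, h α ∂p) :
    Tendsto
      (fun θ : ℝ =>
        Real.sqrt ((∫ α, (f₀ + θ * h α + r θ α) ^ 2 ∂p) -
            (∫ α, (f₀ + θ * h α + r θ α) ∂p) ^ 2) /
          ((∫ α, (f₀ + θ * h α + r θ α) ∂p) - f₀))
      (nhdsWithin (0 : ℝ) (Set.Ioi 0))
      (nhds (Real.sqrt ((∫ α, (h α) ^ 2 ∂p) - (∫ α, h α ∂p) ^ 2) /
        (∫ α, h α ∂p))) := by
  set g : ℝ → ℂ → ℝ := fun θ α => h α + θ⁻¹ * r θ α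
  have hg : ∀ θ, MemLp (g θ) 2 p := fun θ => hh.add ((hr θ).const_mul θ⁻¹)
  have hgh : Tendsto (fun θ => lpNorm (g θ - h) 2 p) (nhdsWithin 0 (Set.Ioi 0)) (nhds 0) := by
    have hsub : ∀ θ, g θ - h = θ⁻¹ • r θ := fun θ => by
      funext α
      simp [g]
    refine (hro.tendsto_div_nhds_zero.mono_left nhdsWithin_le_nhds).congr fun θ => ?_
    simp [hsub, lpNorm_const_smul, ← toReal_eLpNorm (hr θ).1, div_eq_inv_mul]
  have hmom₁ := tendsto_integral_of_tendsto_lpNorm_two_sub hg hh hgh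
  have hmom₂ := tendsto_integral_sq_of_tendsto_lpNorm_two_sub hg hh hgh
  refine (((hmom₂.sub (hmom₁.pow 2)).sqrt).div hmom₁ hmean.ne').congr' ?_
  filter_upwards [self_mem_nhdsWithin] with θ (hθ : 0 < θ)
  have hsplit : ∀ α, f₀ + θ * h α + r θ α = f₀ + θ * g θ α := fun α => by
    simp only [g]
    field_simp
    ring
  simp only [Pi.div_apply, hsplit, sqrt_variance_div_mean_gain_const_add_mul f₀ hθ (hg θ)]
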